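/- Let k ∈ ℤ, 0 < R ≤ ∞, and w₀, w₁, w₂ ∈ C¹((0,R)). Define Q : B_R∖{0} → S₀ by Q(x) = w₀(r)E₀ + w₁(r)E₁(φ) + w₂(r)E₂(φ) for x = (r cos φ, r sin φ). Then Q is differentiable on B_R∖{0} and its gradient satisfies, for every such x, |∇Q(x)|² = w₀'(r)² + w₁'(r)² + w₂'(r)² + (k²/r²)(w₁(r)² + w₂(r)²), where |∇Q|² denotes the sum over all matrix entries Q_{ij} of |∇Q_{ij}|². -/

import Mathlib

/-!
The vectors `nvec k φ`, `mvec k φ` sit at the angle `kφ/2`, so the quadratic expressions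
`E1 k φ`, `E2mat k φ` are a fixed orthonormal pair `Amat`, `Bmat` rotated by the double angle
`kφ`. Hence, away from the origin, `Q` is a smooth expression in `|x|` and the unit complex
number `(z / |z|)ᵏ = e^{ikφ}`, which gives differentiability. The gradient is then computed in
polar coordinates, `|∇f|² = (∂ᵣf)² + (∂_φ f)² / r²`: the radial derivative of `Q` is
`w₀' E0 + w₁' E1 + w₂' E2`, the angular one is `k (w₁ E2 - w₂ E1)` since the frame rotates at
speed `k`, and `E0, E1, E2` are orthonormal for the Frobenius inner product.
-/

open Real Matrix
open scoped ENNReal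

noncomputable section

abbrev Mat3 := Matrix (Fin 3) (Fin 3) ℝ

/-- `Q` is a symmetric traceless 3×3 real matrix, i.e. an element of `S₀`. -/
def isS0 (Q : Mat3) : Prop := Qᵀ = Q ∧ Q.trace = 0

def e1 : Fin 3 → ℝ := ![1, 0, 0]
def e2 : Fin 3 → ℝ := ![0, 1, 0]
def e3 : Fin 3 → ℝ := ![0, 0, 1]

/-- `n(φ) = (cos(kφ/2), sin(kφ/2), 0)`. -/
def nvec (k : ℤ) (φ : ℝ) : Fin 3 → ℝ := ![Real.cos ((k : ℝ) * φ / 2), Real.sin ((k : ℝ) * φ / 2), 0]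

/-- `m(φ) = (−sin(kφ/2), cos(kφ/2), 0)`. -/
def mvec (k : ℤ) (φ : ℝ) : Fin 3 → ℝ := ![-Real.sin ((k : ℝ) * φ / 2), Real.cos ((k : ℝ) * φ / 2), 0]

/-- `I₂ = I₃ − e₃ ⊗ e₃`. -/
def I2 : Mat3 := 1 - vecMulVec e3 e3

def E0 : Mat3 := Real.sqrt (3/2) • (vecMulVec e3 e3 - (1/3 : ℝ) • (1 : Mat3))
def E1 (k : ℤ) (φ : ℝ) : Mat3 :=
  Real.sqrt 2 • (vecMulVec (nvec k φ) (nvec k φ) - (1/2 : ℝ) • I2)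
def E2mat (k : ℤ) (φ : ℝ) : Mat3 :=
  (Real.sqrt 2)⁻¹ • (vecMulVec (nvec k φ) (mvec k φ) + vecMulVec (mvec k φ) (nvec k φ))
def E3mat : Mat3 := (Real.sqrt 2)⁻¹ • (vecMulVec e1 e3 + vecMulVec e3 e1)
def E4mat : Mat3 := (Real.sqrt 2)⁻¹ • (vecMulVec e2 e3 + vecMulVec e3 e2)

/-- The rotation `R_k(ψ)` of winding `k/2` about the vertical axis. -/
def Rk (k : ℤ) (ψ : ℝ) : Mat3 :=
  !![Real.cos ((k : ℝ) * ψ / 2), -Real.sin ((k : ℝ) * ψ / 2), 0;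
     Real.sin ((k : ℝ) * ψ / 2),  Real.cos ((k : ℝ) * ψ / 2), 0;
     0, 0, 1]

/-- The Landau-de Gennes bulk potential. -/
def fbulk (a2 b2 c2 : ℝ) (Q : Mat3) : ℝ :=
  -(a2/2) * (Q*Q).trace - (b2/3) * (Q*Q*Q).trace + (c2/4) * ((Q*Q).trace)^2

/-- The constant `s₊ = (b² + √(b⁴ + 24a²c²))/(4c²)`. -/
def splus (a2 b2 c2 : ℝ) : ℝ := (b2 + Real.sqrt (b2^2 + 24*a2*c2)) / (4*c2)

/-- Laplacian of a scalar function on `ℝ²`, as the sum of the two repeated partial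
derivatives along the coordinate axes. -/
def lap (f : ℝ × ℝ → ℝ) (p : ℝ × ℝ) : ℝ :=
  deriv (fun t => deriv (fun s => f (s, p.2)) t) p.1 +
  deriv (fun t => deriv (fun s => f (p.1, s)) t) p.2

/-- Componentwise Laplacian of a matrix-valued map on `ℝ²`. -/
def matLap (Q : ℝ × ℝ → Mat3) (p : ℝ × ℝ) : Mat3 :=
  Matrix.of fun i j => lap (fun x => Q x i j) p

/-- Squared norm of the gradient of a scalar function on `ℝ²`. -/
def gradNormSq (f : ℝ × ℝ → ℝ) (p : ℝ × ℝ) : ℝ :=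
  (fderiv ℝ f p (1, 0))^2 + (fderiv ℝ f p (0, 1))^2

/-- `|∇Q|²`: sum over all matrix entries of the squared norms of their gradients. -/
def matGradNormSq (Q : ℝ × ℝ → Mat3) (p : ℝ × ℝ) : ℝ :=
  ∑ i, ∑ j, gradNormSq (fun x => Q x i j) p

/-- Membership in the open disk of radius `R ∈ (0,∞]` centered at the origin. -/
def inBall (R : ℝ≥0∞) (x : ℝ × ℝ) : Prop :=
  ENNReal.ofReal (Real.sqrt (x.1^2 + x.2^2)) < R

/-- The right-hand side of the Euler–Lagrange equation
`ΔQ = −a²Q − b²(Q² − (1/3)|Q|²I₃) + c²|Q|²Q`. -/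
def ELrhs (a2 b2 c2 : ℝ) (A : Mat3) : Mat3 :=
  -a2 • A - b2 • (A * A - ((1/3 : ℝ) * (A * A).trace) • (1 : Mat3)) + (c2 * (A * A).trace) • A

/-- Frobenius squared norm of a 3×3 matrix. -/
def frobSq (A : Mat3) : ℝ := ∑ i, ∑ j, (A i j)^2

/-- For `x = (x₁,x₂) ∈ ℝ²`, `x̃ = (x₁,x₂,0) ∈ ℝ³`. -/
def tilde (x : ℝ × ℝ) : Fin 3 → ℝ := ![x.1, x.2, 0]

/-- The projection `P₂(x₁,x₂,x₃) = (x₁,x₂)`. -/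
def P2 (v : Fin 3 → ℝ) : ℝ × ℝ := (v 0, v 1)

/-- The antisymmetric matrix `S₀ = e₂⊗e₁ − e₁⊗e₂`. -/
def S0mat : Mat3 := vecMulVec e2 e1 - vecMulVec e1 e2

end

noncomputable section

def Amat : Mat3 := (√2)⁻¹ • !![1, 0, 0; 0, -1, 0; 0, 0, 0]
def Bmat : Mat3 := (√2)⁻¹ • !![0, 1, 0; 1, 0, 0; 0, 0, 0]

theorem E1_eq_cos_smul_add_sin_smul (k : ℤ) (φ : ℝ) :
    E1 k φ = cos (k * φ) • Amat + sin (k * φ) • Bmat := by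
  rw [show (k : ℝ) * φ = 2 * (k * φ / 2) by ring, cos_two_mul', sin_two_mul]
  have hpyth := cos_sq_add_sin_sq (k * φ / 2)
  ext i j
  fin_cases i <;> fin_cases j <;>
    simp [E1, Amat, Bmat, I2, nvec, e3] <;> field_simp <;> rw [sq_sqrt zero_le_two] <;>
    linear_combination 2 * hpyth

theorem E2mat_eq_neg_sin_smul_add_cos_smul (k : ℤ) (φ : ℝ) :
    E2mat k φ = (-sin (k * φ)) • Amat + cos (k * φ) • Bmat := by
  rw [show (k : ℝ) * φ = 2 * (k * φ / 2) by ring, cos_two_mul', sin_two_mul]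
  ext i j
  fin_cases i <;> fin_cases j <;> simp [E2mat, Amat, Bmat, nvec, mvec] <;> ring

theorem frobSq_E0_Amat_Bmat (a b c : ℝ) :
    frobSq (a • E0 + b • Amat + c • Bmat) = a ^ 2 + b ^ 2 + c ^ 2 := by
  simp [frobSq, Fin.sum_univ_three, E0, Amat, Bmat, e3, Matrix.one_apply]
  ring_nf
  norm_num
  ring

theorem hasDerivAt_E1_apply (k : ℤ) (φ : ℝ) (i j : Fin 3) :
    HasDerivAt (fun t => E1 k t i j) (k * E2mat k φ i j) φ := by
  simp only [E1_eq_cos_smul_add_sin_smul, E2mat_eq_neg_sin_smul_add_cos_smul,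
    Matrix.add_apply, Matrix.smul_apply, smul_eq_mul]
  have hkt : HasDerivAt (fun t => (k : ℝ) * t) k φ := by
    simpa using (hasDerivAt_id φ).const_mul (k : ℝ)
  exact ((hkt.cos.mul_const (Amat i j)).add (hkt.sin.mul_const (Bmat i j))).congr_deriv (by ring)

theorem hasDerivAt_E2mat_apply (k : ℤ) (φ : ℝ) (i j : Fin 3) :
    HasDerivAt (fun t => E2mat k t i j) (-(k * E1 k φ i j)) φ := by
  simp only [E1_eq_cos_smul_add_sin_smul, E2mat_eq_neg_sin_smul_add_cos_smul,
    Matrix.add_apply, Matrix.smul_apply, smul_eq_mul]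
  have hkt : HasDerivAt (fun t => (k : ℝ) * t) k φ := by
    simpa using (hasDerivAt_id φ).const_mul (k : ℝ)
  exact ((hkt.sin.neg.mul_const (Amat i j)).add (hkt.cos.mul_const (Bmat i j))).congr_deriv
    (by ring)

def radialAnsatz (k : ℤ) (a b c φ : ℝ) : Mat3 := a • E0 + b • E1 k φ + c • E2mat k φ

theorem radialAnsatz_eq (k : ℤ) (a b c φ : ℝ) :
    radialAnsatz k a b c φ = a • E0 + (b * cos (k * φ) - c * sin (k * φ)) • Amat
      + (b * sin (k * φ) + c * cos (k * φ)) • Bmat := by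
  rw [radialAnsatz, E1_eq_cos_smul_add_sin_smul, E2mat_eq_neg_sin_smul_add_cos_smul]
  module

theorem frobSq_radialAnsatz (k : ℤ) (a b c φ : ℝ) :
    frobSq (radialAnsatz k a b c φ) = a ^ 2 + b ^ 2 + c ^ 2 := by
  rw [radialAnsatz_eq, frobSq_E0_Amat_Bmat]
  linear_combination (b ^ 2 + c ^ 2) * cos_sq_add_sin_sq ((k : ℝ) * φ)

theorem HasDerivAt.radialAnsatz_apply {w₀ w₁ w₂ : ℝ → ℝ} {a₀ a₁ a₂ r : ℝ}
    (h₀ : HasDerivAt w₀ a₀ r) (h₁ : HasDerivAt w₁ a₁ r) (h₂ : HasDerivAt w₂ a₂ r)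
    (k : ℤ) (φ : ℝ) (i j : Fin 3) :
    HasDerivAt (fun s => radialAnsatz k (w₀ s) (w₁ s) (w₂ s) φ i j)
      (radialAnsatz k a₀ a₁ a₂ φ i j) r := by
  simp only [radialAnsatz, Matrix.add_apply, Matrix.smul_apply, smul_eq_mul]
  exact ((h₀.mul_const _).add (h₁.mul_const _)).add (h₂.mul_const _)

theorem hasDerivAt_radialAnsatz_apply_angle (k : ℤ) (a b c φ : ℝ) (i j : Fin 3) :
    HasDerivAt (fun t => radialAnsatz k a b c t i j)
      (radialAnsatz k 0 (-(k * c)) (k * b) φ i j) φ := by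
  simp only [radialAnsatz, Matrix.add_apply, Matrix.smul_apply, smul_eq_mul]
  exact (((hasDerivAt_const φ _).add ((hasDerivAt_E1_apply k φ i j).const_mul b)).add
    ((hasDerivAt_E2mat_apply k φ i j).const_mul c)).congr_deriv (by ring)

theorem gradNormSq_eq_of_hasDerivAt_polar {f : ℝ × ℝ → ℝ} {r φ a b : ℝ} (hr : r ≠ 0)
    (hf : DifferentiableAt ℝ f (r * cos φ, r * sin φ))
    (ha : HasDerivAt (fun s => f (s * cos φ, s * sin φ)) a r)
    (hb : HasDerivAt (fun t => f (r * cos t, r * sin t)) b φ) :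
    gradNormSq f (r * cos φ, r * sin φ) = a ^ 2 + b ^ 2 / r ^ 2 := by
  unfold gradNormSq
  set L := fderiv ℝ f (r * cos φ, r * sin φ)
  have hL : ∀ u v : ℝ, L (u, v) = u * L (1, 0) + v * L (0, 1) := fun u v => by
    rw [show ((u, v) : ℝ × ℝ) = u • (1, 0) + v • (0, 1) by simp, map_add, map_smul, map_smul,
      smul_eq_mul, smul_eq_mul]
  have hradial : HasDerivAt (fun s : ℝ => (s * cos φ, s * sin φ)) (cos φ, sin φ) r := by
    simpa using ((hasDerivAt_id r).mul_const (cos φ)).prodMk ((hasDerivAt_id r).mul_const (sin φ))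
  have hangular : HasDerivAt (fun t : ℝ => (r * cos t, r * sin t)) (-(r * sin φ), r * cos φ) φ := by
    simpa using ((hasDerivAt_cos φ).const_mul r).prodMk ((hasDerivAt_sin φ).const_mul r)
  have ha' : a = cos φ * L (1, 0) + sin φ * L (0, 1) := by
    rw [ha.unique (hf.hasFDerivAt.comp_hasDerivAt r hradial), hL]
  have hb' : b = r * (cos φ * L (0, 1) - sin φ * L (1, 0)) := by
    rw [hb.unique (hf.hasFDerivAt.comp_hasDerivAt φ hangular), hL]; ring
  rw [ha', hb', mul_pow, mul_div_cancel_left₀ _ (pow_ne_zero 2 hr)]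
  linear_combination -(L (1, 0) ^ 2 + L (0, 1) ^ 2) * sin_sq_add_cos_sq φ

theorem equivRealProdCLM_symm_polar (r φ : ℝ) :
    Complex.equivRealProdCLM.symm (r * cos φ, r * sin φ) = Complex.exp (φ * Complex.I) * r := by
  rw [Complex.equivRealProdCLM_symm_apply, Complex.exp_mul_I, ← Complex.ofReal_cos,
    ← Complex.ofReal_sin]
  push_cast; ring

def windingPhase (k : ℤ) (x : ℝ × ℝ) : ℂ :=
  (Complex.equivRealProdCLM.symm x * (‖Complex.equivRealProdCLM.symm x‖ : ℂ)⁻¹) ^ k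

theorem windingPhase_polar (k : ℤ) {r : ℝ} (hr : 0 < r) (φ : ℝ) :
    windingPhase k (r * cos φ, r * sin φ) = Complex.exp ((k * φ : ℝ) * Complex.I) := by
  have hr' : (r : ℂ) ≠ 0 := by exact_mod_cast hr.ne'
  rw [windingPhase, equivRealProdCLM_symm_polar, norm_mul, Complex.norm_exp_ofReal_mul_I,
    Complex.norm_real, Real.norm_of_nonneg hr.le, one_mul, mul_inv_cancel_right₀ hr',
    ← Complex.exp_int_mul]
  push_cast; ring_nf

theorem differentiableAt_windingPhase (k : ℤ) {x : ℝ × ℝ} (hx : x ≠ 0) :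
    DifferentiableAt ℝ (windingPhase k) x := by
  set z := Complex.equivRealProdCLM.symm
  have hz : z x ≠ 0 := by simpa [z] using hx
  have hnorm : DifferentiableAt ℝ (fun y => (‖z y‖ : ℂ)) x :=
    Complex.ofRealCLM.differentiableAt.comp x (z.differentiableAt.norm ℝ hz)
  have hunit : DifferentiableAt ℝ (fun y => z y * (‖z y‖ : ℂ)⁻¹) x :=
    z.differentiableAt.mul (hnorm.inv (by simpa using hz))
  exact ((differentiableAt_zpow.2 (Or.inl (by simpa using hz))).restrictScalars ℝ).comp x hunit

theorem differentiableAt_apply_of_eq_radialAnsatz {k : ℤ} {U : Set ℝ} (hU : IsOpen U)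
    (hUpos : ∀ s ∈ U, 0 < s) {w₀ w₁ w₂ : ℝ → ℝ} {Q : ℝ × ℝ → Mat3}
    (hQ : ∀ s ∈ U, ∀ t, Q (s * cos t, s * sin t) = radialAnsatz k (w₀ s) (w₁ s) (w₂ s) t)
    {r : ℝ} (hr : r ∈ U) (h₀ : DifferentiableAt ℝ w₀ r) (h₁ : DifferentiableAt ℝ w₁ r)
    (h₂ : DifferentiableAt ℝ w₂ r) (φ : ℝ) (i j : Fin 3) :
    DifferentiableAt ℝ (fun x => Q x i j) (r * cos φ, r * sin φ) := by
  set z := Complex.equivRealProdCLM.symm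
  set ρ : ℝ × ℝ → ℝ := fun x => ‖z x‖
  set p : ℝ × ℝ := (r * cos φ, r * sin φ)
  have hρ_polar : ∀ s ∈ U, ∀ t, ρ (s * cos t, s * sin t) = s := fun s hs t => by
    simp [ρ, z, equivRealProdCLM_symm_polar, abs_of_pos (hUpos s hs)]
  have hpolar : ∀ x, (ρ x * cos (Complex.arg (z x)), ρ x * sin (Complex.arg (z x))) = x :=
    fun x => by simp [ρ, z, Complex.norm_mul_cos_arg, Complex.norm_mul_sin_arg]
  -- `radialAnsatz_eq` with `e^{ikφ}` read off the winding phase: a formula smooth off the origin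
  set model : ℝ × ℝ → ℝ := fun x => w₀ (ρ x) * E0 i j
    + (w₁ (ρ x) * (windingPhase k x).re - w₂ (ρ x) * (windingPhase k x).im) * Amat i j
    + (w₁ (ρ x) * (windingPhase k x).im + w₂ (ρ x) * (windingPhase k x).re) * Bmat i j
  have hQ_model : ∀ x ∈ ρ ⁻¹' U, Q x i j = model x := fun x hx => by
    rw [← hpolar x, hQ _ hx, radialAnsatz_eq]
    simp only [model, hρ_polar _ hx, windingPhase_polar k (hUpos _ hx),
      Complex.exp_ofReal_mul_I_re, Complex.exp_ofReal_mul_I_im, Matrix.add_apply,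
      Matrix.smul_apply, smul_eq_mul]
  have hρp : ρ p = r := hρ_polar r hr φ
  have hzp : z p ≠ 0 := fun h => (hUpos r hr).ne' (by rw [← hρp]; simp [ρ, h])
  have hρ : DifferentiableAt ℝ ρ p := z.differentiableAt.norm ℝ hzp
  have hp0 : p ≠ 0 := fun h => hzp (by simp [h])
  have hphase := differentiableAt_windingPhase k hp0
  have hre : DifferentiableAt ℝ (fun x => (windingPhase k x).re) p :=
    Complex.reCLM.differentiableAt.comp p hphase
  have him : DifferentiableAt ℝ (fun x => (windingPhase k x).im) p :=
    Complex.imCLM.differentiableAt.comp p hphase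
  rw [← hρp] at h₀ h₁ h₂
  have hw₀ := h₀.comp p hρ
  have hw₁ := h₁.comp p hρ
  have hw₂ := h₂.comp p hρ
  have hmodel : DifferentiableAt ℝ model p := by
    simp only [model]; fun_prop
  exact hmodel.congr_of_eventuallyEq (Filter.eventually_of_mem
    ((hU.preimage z.continuous.norm).mem_nhds (show ρ p ∈ U from hρp ▸ hr)) hQ_model)

theorem matGradNormSq_of_eq_radialAnsatz {k : ℤ} {U : Set ℝ} (hU : IsOpen U)
    (hUpos : ∀ s ∈ U, 0 < s) {w₀ w₁ w₂ : ℝ → ℝ} {Q : ℝ × ℝ → Mat3}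
    (hQ : ∀ s ∈ U, ∀ t, Q (s * cos t, s * sin t) = radialAnsatz k (w₀ s) (w₁ s) (w₂ s) t)
    {r a₀ a₁ a₂ : ℝ} (hr : r ∈ U) (h₀ : HasDerivAt w₀ a₀ r) (h₁ : HasDerivAt w₁ a₁ r)
    (h₂ : HasDerivAt w₂ a₂ r) (φ : ℝ) :
    matGradNormSq Q (r * cos φ, r * sin φ)
      = a₀ ^ 2 + a₁ ^ 2 + a₂ ^ 2 + k ^ 2 / r ^ 2 * (w₁ r ^ 2 + w₂ r ^ 2) := by
  have hentry : ∀ i j, gradNormSq (fun x => Q x i j) (r * cos φ, r * sin φ)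
      = radialAnsatz k a₀ a₁ a₂ φ i j ^ 2
        + radialAnsatz k 0 (-(k * w₂ r)) (k * w₁ r) φ i j ^ 2 / r ^ 2 := fun i j =>
    gradNormSq_eq_of_hasDerivAt_polar (hUpos r hr).ne'
      (differentiableAt_apply_of_eq_radialAnsatz hU hUpos hQ hr h₀.differentiableAt
        h₁.differentiableAt h₂.differentiableAt φ i j)
      ((h₀.radialAnsatz_apply h₁ h₂ k φ i j).congr_of_eventuallyEq
        (Filter.eventually_of_mem (hU.mem_nhds hr) fun s hs => congrFun (congrFun (hQ s hs φ) i) j))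
      ((hasDerivAt_radialAnsatz_apply_angle k (w₀ r) (w₁ r) (w₂ r) φ i j).congr_of_eventuallyEq
        (Filter.Eventually.of_forall fun t => congrFun (congrFun (hQ r hr t) i) j))
  calc matGradNormSq Q (r * cos φ, r * sin φ)
      = frobSq (radialAnsatz k a₀ a₁ a₂ φ)
        + frobSq (radialAnsatz k 0 (-(k * w₂ r)) (k * w₁ r) φ) / r ^ 2 := by
        simp only [matGradNormSq, hentry, frobSq, Finset.sum_add_distrib, Finset.sum_div]
    _ = a₀ ^ 2 + a₁ ^ 2 + a₂ ^ 2 + k ^ 2 / r ^ 2 * (w₁ r ^ 2 + w₂ r ^ 2) := by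
        rw [frobSq_radialAnsatz, frobSq_radialAnsatz]; ring

end

theorem stmt10_general (k : ℤ) (R : ℝ≥0∞) (w₀ w₁ w₂ : ℝ → ℝ)
    (hw₀ : ContDiffOn ℝ 1 w₀ {r : ℝ | 0 < r ∧ ENNReal.ofReal r < R})
    (hw₁ : ContDiffOn ℝ 1 w₁ {r : ℝ | 0 < r ∧ ENNReal.ofReal r < R})
    (hw₂ : ContDiffOn ℝ 1 w₂ {r : ℝ | 0 < r ∧ ENNReal.ofReal r < R})
    (Q : ℝ × ℝ → Mat3)
    (hQ : ∀ r φ : ℝ, 0 < r → ENNReal.ofReal r < R →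
      Q (r * Real.cos φ, r * Real.sin φ) = w₀ r • E0 + w₁ r • E1 k φ + w₂ r • E2mat k φ) :
    ∀ r φ : ℝ, 0 < r → ENNReal.ofReal r < R →
      (∀ i j, DifferentiableAt ℝ (fun x => Q x i j) (r * Real.cos φ, r * Real.sin φ)) ∧
      matGradNormSq Q (r * Real.cos φ, r * Real.sin φ) =
        (deriv w₀ r)^2 + (deriv w₁ r)^2 + (deriv w₂ r)^2
          + (k : ℝ)^2 / r^2 * ((w₁ r)^2 + (w₂ r)^2) := by
  set U := {r : ℝ | 0 < r ∧ ENNReal.ofReal r < R}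
  have hU : IsOpen U := isOpen_Ioi.inter (isOpen_lt ENNReal.continuous_ofReal continuous_const)
  have hQU : ∀ s ∈ U, ∀ t, Q (s * cos t, s * sin t) = radialAnsatz k (w₀ s) (w₁ s) (w₂ s) t :=
    fun s hs t => hQ s t hs.1 hs.2
  have hderiv : ∀ {w : ℝ → ℝ}, ContDiffOn ℝ 1 w U → ∀ s ∈ U, HasDerivAt w (deriv w s) s :=
    fun hw s hs => ((hw.differentiableOn one_ne_zero).differentiableAt (hU.mem_nhds hs)).hasDerivAt
  intro r φ hr hrR
  have hrU : r ∈ U := ⟨hr, hrR⟩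
  exact ⟨differentiableAt_apply_of_eq_radialAnsatz hU (fun s hs => hs.1) hQU hrU
      (hderiv hw₀ r hrU).differentiableAt (hderiv hw₁ r hrU).differentiableAt
      (hderiv hw₂ r hrU).differentiableAt φ,
    matGradNormSq_of_eq_radialAnsatz hU (fun s hs => hs.1) hQU hrU
      (hderiv hw₀ r hrU) (hderiv hw₁ r hrU) (hderiv hw₂ r hrU) φ⟩

/-- differentiability and the gradient formula
`|∇Q|² = w₀'² + w₁'² + w₂'² + (k²/r²)(w₁² + w₂²)` for
`Q = w₀(r)E₀ + w₁(r)E₁(φ) + w₂(r)E₂(φ)` on `B_R∖{0}`. -/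
theorem stmt10 (k : ℤ) (R : ℝ≥0∞) (hR : 0 < R) (w₀ w₁ w₂ : ℝ → ℝ)
    (hw₀ : ContDiffOn ℝ 1 w₀ {r : ℝ | 0 < r ∧ ENNReal.ofReal r < R})
    (hw₁ : ContDiffOn ℝ 1 w₁ {r : ℝ | 0 < r ∧ ENNReal.ofReal r < R})
    (hw₂ : ContDiffOn ℝ 1 w₂ {r : ℝ | 0 < r ∧ ENNReal.ofReal r < R})
    (Q : ℝ × ℝ → Mat3)
    (hQ : ∀ r φ : ℝ, 0 < r → ENNReal.ofReal r < R →
      Q (r * Real.cos φ, r * Real.sin φ) = w₀ r • E0 + w₁ r • E1 k φ + w₂ r • E2mat k φ) :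
    ∀ r φ : ℝ, 0 < r → ENNReal.ofReal r < R →
      (∀ i j, DifferentiableAt ℝ (fun x => Q x i j) (r * Real.cos φ, r * Real.sin φ)) ∧
      matGradNormSq Q (r * Real.cos φ, r * Real.sin φ) =
        (deriv w₀ r)^2 + (deriv w₁ r)^2 + (deriv w₂ r)^2
          + (k : ℝ)^2 / r^2 * ((w₁ r)^2 + (w₂ r)^2) :=
  stmt10_general k R w₀ w₁ w₂ hw₀ hw₁ hw₂ Q hQ
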